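/- (Approximation of geometric maxima by a discretized Gumbel distribution) For each integer n ≥ 1, let X_1, …, X_n be i.i.d. geometric random variables with success probability p ∈ (0,1) and failure probability q = 1 − p. Then for every integer k ≥ 0, writing k* = k·log(1/q) − log n (so that e^{−k*} = n q^k), one has | P( X_(n) < k ) − exp(−n q^k) | = | P( X_(n) < (log n + k*)/log(1/q) ) − exp(−e^{−k*}) | ≤ (log n)/(q n) + 1/n. -/

import Mathlib

/-!
Independence turns `P(X₍ₙ₎ < k)` into `(1 - qᵏ)ⁿ`, and `k*` is exactly the shift for which the
threshold `(log n + k*) / log (1/q)` is `k` and `e^{-k*} = n qᵏ`; this gives the equality.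
The bound is the uniform estimate `0 ≤ e^{-nx} - (1 - x)ⁿ ≤ log n / n + 1 / n` on `[0, 1]`:
the gap is at most `x` everywhere, and at most `e^{-nx} ≤ 1 / n` once `x ≥ log n / n`.
-/

open MeasureTheory ProbabilityTheory

namespace Real

lemma one_sub_sq_mul_exp_neg_le {x : ℝ} (hx1 : x ≤ 1) :
    (1 - x ^ 2) * exp (-x) ≤ 1 - x := by
  have h : (1 + x) * exp (-x) ≤ 1 := by
    rw [exp_neg, ← div_eq_mul_inv, div_le_one (exp_pos x)]
    linarith [add_one_le_exp x]
  calc (1 - x ^ 2) * exp (-x) = (1 - x) * ((1 + x) * exp (-x)) := by ring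
    _ ≤ 1 - x := mul_le_of_le_one_right (by linarith) h

lemma one_sub_pow_le_exp_neg_mul {x : ℝ} (hx1 : x ≤ 1) (n : ℕ) :
    (1 - x) ^ n ≤ exp (-(n * x)) := by
  rw [neg_mul_eq_mul_neg, exp_nat_mul]
  exact pow_le_pow_left₀ (by linarith) (one_sub_le_exp_neg x) n

/-- Bernoulli's inequality applied to `(1 - x) ≥ (1 - x²) e^{-x}` gives
`(1 - x)ⁿ ≥ (1 - n x²) e^{-nx}`, and `n x e^{-nx} ≤ 1`. -/
lemma exp_neg_mul_sub_one_sub_pow_le {x : ℝ} (hx0 : 0 ≤ x) (hx1 : x ≤ 1) (n : ℕ) :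
    exp (-(n * x)) - (1 - x) ^ n ≤ x := by
  have hbernoulli : (1 - n * x ^ 2) * exp (-(n * x)) ≤ (1 - x) ^ n := calc
    (1 - n * x ^ 2) * exp (-(n * x)) ≤ (1 - x ^ 2) ^ n * exp (-x) ^ n := by
      rw [← exp_nat_mul, mul_neg]
      gcongr
      simpa [sub_eq_add_neg] using one_add_mul_le_pow (a := -x ^ 2) (by nlinarith) n
    _ = ((1 - x ^ 2) * exp (-x)) ^ n := (mul_pow _ _ _).symm
    _ ≤ (1 - x) ^ n := by
      gcongr
      · exact mul_nonneg (by nlinarith) (exp_pos _).le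
      · exact one_sub_sq_mul_exp_neg_le hx1
  have hdecay : n * x * exp (-(n * x)) ≤ 1 := by
    rw [exp_neg, ← div_eq_mul_inv, div_le_one (exp_pos _)]
    linarith [add_one_le_exp (n * x)]
  nlinarith

lemma abs_one_sub_pow_sub_exp_neg_mul_le {x : ℝ} (hx0 : 0 ≤ x) (hx1 : x ≤ 1) {n : ℕ}
    (hn : 0 < n) : |(1 - x) ^ n - exp (-(n * x))| ≤ log n / n + 1 / n := by
  have hn' : (0 : ℝ) < n := by exact_mod_cast hn
  rw [abs_sub_comm, abs_of_nonneg (sub_nonneg.2 (one_sub_pow_le_exp_neg_mul hx1 n))]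
  have hlog : 0 ≤ log n / n := div_nonneg (log_natCast_nonneg n) hn'.le
  rcases le_or_gt x (log n / n) with hsmall | hlarge
  · linarith [exp_neg_mul_sub_one_sub_pow_le hx0 hx1 n, one_div_pos.2 hn']
  · have : exp (-(n * x)) ≤ 1 / n := calc
      exp (-(n * x)) ≤ exp (-log n) := exp_le_exp.2 (by linarith [(div_lt_iff₀' hn').1 hlarge])
      _ = 1 / n := by rw [exp_neg, exp_log hn', one_div]
    linarith [pow_nonneg (sub_nonneg.2 hx1) n]

end Real

section Geometric

variable {Ω : Type*} [MeasurableSpace Ω] {μ : Measure Ω} {q : ℝ}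

lemma measure_lt_eq_one_sub_pow (hq0 : 0 ≤ q) (hq1 : q ≤ 1) {X : Ω → ℕ} (hX : Measurable X)
    (hgeo : ∀ j, μ {ω | X ω = j} = ENNReal.ofReal ((1 - q) * q ^ j)) (k : ℕ) :
    μ {ω | X ω < k} = ENNReal.ofReal (1 - q ^ k) := by
  have hset : {ω | X ω < k} = X ⁻¹' ↑(Finset.range k) := by ext; simp
  rw [hset, ← sum_measure_preimage_singleton _ fun j _ => hX (measurableSet_singleton j)]
  simp only [Set.preimage, Set.mem_singleton_iff, hgeo]
  rw [← ENNReal.ofReal_sum_of_nonneg fun j _ => by have := sub_nonneg.2 hq1; positivity,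
    ← Finset.mul_sum, mul_neg_geom_sum]

lemma measure_forall_lt_eq_one_sub_pow_pow (hq0 : 0 ≤ q) (hq1 : q ≤ 1) {ι : Type*} [Fintype ι]
    {X : ι → Ω → ℕ} (hX : ∀ i, Measurable (X i))
    (hgeo : ∀ i j, μ {ω | X i ω = j} = ENNReal.ofReal ((1 - q) * q ^ j))
    (hindep : iIndepFun X μ) (k : ℕ) :
    μ {ω | ∀ i, X i ω < k} = ENNReal.ofReal ((1 - q ^ k) ^ Fintype.card ι) := by
  have hset : {ω | ∀ i, X i ω < k} = ⋂ i, X i ⁻¹' Set.Iio k := by ext; simp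
  rw [hset, hindep.meas_iInter fun i => ⟨_, measurableSet_Iio, rfl⟩]
  simp only [Set.preimage, Set.mem_Iio,
    measure_lt_eq_one_sub_pow hq0 hq1 (hX _) (hgeo _), Finset.prod_const, Finset.card_univ]
  rw [ENNReal.ofReal_pow (by linarith [pow_le_one₀ hq0 hq1 (n := k)])]

end Geometric

theorem geometric_max_discretized_gumbel_general {Ω : Type*} [MeasurableSpace Ω] (P : Measure Ω)
    (n : ℕ) (hn : 1 ≤ n) (p q : ℝ) (hp : 0 < p) (hp1 : p < 1)
    (hq : q = 1 - p) (X : Fin n → Ω → ℕ)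
    (hmeas : ∀ i, Measurable (X i))
    (hgeo : ∀ i k, P {ω | X i ω = k} = ENNReal.ofReal (p * q ^ k))
    (hindep : iIndepFun X P) :
    ∀ (k : ℕ) (kstar : ℝ), kstar = k * Real.log (1 / q) - Real.log n →
      |(P {ω | ∀ i, X i ω < k}).toReal - Real.exp (-(n * q ^ k))| =
        |(P {ω | ∀ i, (X i ω : ℝ) < (Real.log n + kstar) / Real.log (1 / q)}).toReal -
          Real.exp (-Real.exp (-kstar))| ∧
      |(P {ω | ∀ i, X i ω < k}).toReal - Real.exp (-(n * q ^ k))| ≤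
        Real.log n / (q * n) + 1 / n := by
  intro k kstar hkstar
  obtain rfl : p = 1 - q := by linarith
  have hq0 : 0 < q := by linarith
  have hq1 : q < 1 := by linarith
  have hn0 : (0 : ℝ) < n := by exact_mod_cast hn
  have hlog : Real.log (1 / q) ≠ 0 := (Real.log_pos (one_lt_one_div hq0 hq1)).ne'
  have hthreshold : (Real.log n + kstar) / Real.log (1 / q) = k := by
    rw [hkstar]; field_simp; ring
  have hscale : Real.exp (-kstar) = n * q ^ k := by
    rw [hkstar, one_div, Real.log_inv, neg_sub, mul_neg, sub_neg_eq_add, Real.exp_add,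
      Real.exp_log hn0, Real.exp_nat_mul, Real.exp_log hq0]
  have hmax : (P {ω | ∀ i, X i ω < k}).toReal = (1 - q ^ k) ^ n := by
    rw [measure_forall_lt_eq_one_sub_pow_pow hq0.le hq1.le hmeas hgeo hindep, Fintype.card_fin,
      ENNReal.toReal_ofReal (pow_nonneg (sub_nonneg.2 (pow_le_one₀ hq0.le hq1.le)) n)]
  refine ⟨by simp only [hthreshold, hscale, Nat.cast_lt], ?_⟩
  calc |(P {ω | ∀ i, X i ω < k}).toReal - Real.exp (-(n * q ^ k))|
      ≤ Real.log n / n + 1 / n := hmax ▸ Real.abs_one_sub_pow_sub_exp_neg_mul_le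
        (pow_nonneg hq0.le k) (pow_le_one₀ hq0.le hq1.le) hn
    _ ≤ Real.log n / (q * n) + 1 / n := by
      gcongr
      exact mul_le_of_le_one_left hn0.le hq1.le

/-- **Approximation of geometric maxima by a discretized Gumbel distribution.** Let
`X₁, …, Xₙ` be i.i.d. geometric random variables with success probability `p ∈ (0,1)` and
failure probability `q = 1 − p`.  Then for every integer `k ≥ 0`, writing
`k* = k log(1/q) − log n` (so that `e^{−k*} = n q^k`),
`|P(X₍ₙ₎ < k) − exp(−n q^k)| = |P(X₍ₙ₎ < (log n + k*)/log(1/q)) − exp(−e^{−k*})|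
  ≤ (log n)/(qn) + 1/n`. -/
theorem geometric_max_discretized_gumbel {Ω : Type*} [MeasurableSpace Ω] (P : Measure Ω)
    [IsProbabilityMeasure P] (n : ℕ) (hn : 1 ≤ n) (p q : ℝ) (hp : 0 < p) (hp1 : p < 1)
    (hq : q = 1 - p) (X : Fin n → Ω → ℕ)
    (hmeas : ∀ i, Measurable (X i))
    (hgeo : ∀ i k, P {ω | X i ω = k} = ENNReal.ofReal (p * q ^ k))
    (hindep : iIndepFun X P) :
    ∀ (k : ℕ) (kstar : ℝ), kstar = k * Real.log (1 / q) - Real.log n →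
      |(P {ω | ∀ i, X i ω < k}).toReal - Real.exp (-(n * q ^ k))| =
        |(P {ω | ∀ i, (X i ω : ℝ) < (Real.log n + kstar) / Real.log (1 / q)}).toReal -
          Real.exp (-Real.exp (-kstar))| ∧
      |(P {ω | ∀ i, X i ω < k}).toReal - Real.exp (-(n * q ^ k))| ≤
        Real.log n / (q * n) + 1 / n :=
  geometric_max_discretized_gumbel_general P n hn p q hp hp1 hq X hmeas hgeo hindep
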